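/- Let B ∈ End(V ⊗ V) satisfy the braid relation and let K_N := ker([N!]_B) ⊆ V^{⊗N}. Then the two-sided ideal in the tensor algebra T(V) generated by ⋃_N K_N satisfies: for each N, its degree-N component contains K_N, and if B satisfies (1+B) [N-1]-compatibility (i.e., [N!]_B = (1_{V} ⊗ [(N−1)!]_B)·[N]'_B for the opposite recursion), then V ⊗ K_{N-1} + K_{N-1} ⊗ V ⊆ K_N. -/

import Mathlib

open TensorProduct Matrix

section Braided

variable {k : Type*} [Field k] {ι : Type*} [Fintype ι] [DecidableEq ι]

/-- The braid matrix `B` acting on tensor factors `i, i+1` (0-based) of the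
`N`-fold tensor power (in components). -/
def Bop (B : Matrix (ι × ι) (ι × ι) k) (N i : ℕ) :
    Matrix (Fin N → ι) (Fin N → ι) k :=
  if h : i + 1 < N then
    fun f g =>
      B (f ⟨i, Nat.lt_of_succ_lt h⟩, f ⟨i + 1, h⟩)
          (g ⟨i, Nat.lt_of_succ_lt h⟩, g ⟨i + 1, h⟩) *
        ∏ j : Fin N,
          if (j : ℕ) = i ∨ (j : ℕ) = i + 1 then 1 else (if f j = g j then (1 : k) else 0)
  else 1

/-- The descending products `1, B_{N-1}, B_{N-1}B_{N-2}, ...` (here `B_m` is the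
braid matrix acting on factors `m, m+1`, 1-based). -/
def chainDesc (B : Matrix (ι × ι) (ι × ι) k) (N : ℕ) :
    ℕ → Matrix (Fin N → ι) (Fin N → ι) k
  | 0 => 1
  | m + 1 => chainDesc B N m * Bop B N (N - 2 - m)

/-- The braided integer `[N]_B = 1 + B_{N-1} + B_{N-1}B_{N-2} + ⋯ + B_{N-1}⋯B_1`. -/
def braidedInt (B : Matrix (ι × ι) (ι × ι) k) (N : ℕ) :
    Matrix (Fin N → ι) (Fin N → ι) k :=
  ∑ m ∈ Finset.range N, chainDesc B N m

/-- Extension `M ↦ M ⊗ 1` of an operator on the `N`-fold tensor power to the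
`(N+1)`-fold tensor power. -/
def extendLast {k : Type*} [Field k] {ι : Type*} [Fintype ι] [DecidableEq ι] {N : ℕ}
    (M : Matrix (Fin N → ι) (Fin N → ι) k) :
    Matrix (Fin (N + 1) → ι) (Fin (N + 1) → ι) k :=
  fun f g => M (Fin.init f) (Fin.init g) * (if f (Fin.last N) = g (Fin.last N) then 1 else 0)

/-- The braided factorial: `[0!]_B = 1`, `[N!]_B = ([(N-1)!]_B ⊗ 1) [N]_B`. -/
def braidedFactorial (B : Matrix (ι × ι) (ι × ι) k) :
    (N : ℕ) → Matrix (Fin N → ι) (Fin N → ι) k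
  | 0 => 1
  | N + 1 => extendLast (braidedFactorial B N) * braidedInt B (N + 1)

end Braided

section Braided'

variable {k : Type*} [Field k] {ι : Type*} [Fintype ι] [DecidableEq ι]

/-- The ascending products `1, B_1, B_1B_2, ...`. -/
def chainAsc (B : Matrix (ι × ι) (ι × ι) k) (N : ℕ) :
    ℕ → Matrix (Fin N → ι) (Fin N → ι) k
  | 0 => 1
  | m + 1 => chainAsc B N m * Bop B N m

/-- The opposite braided integer `[N]'_B = 1 + B_1 + B_1B_2 + ⋯ + B_1⋯B_{N-1}`. -/
def braidedInt' (B : Matrix (ι × ι) (ι × ι) k) (N : ℕ) :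
    Matrix (Fin N → ι) (Fin N → ι) k :=
  ∑ m ∈ Finset.range N, chainAsc B N m

/-- Extension `M ↦ 1 ⊗ M` of an operator on the `N`-fold tensor power to the
`(N+1)`-fold tensor power. -/
def extendFirst {N : ℕ} (M : Matrix (Fin N → ι) (Fin N → ι) k) :
    Matrix (Fin (N + 1) → ι) (Fin (N + 1) → ι) k :=
  fun f g => (if f 0 = g 0 then 1 else 0) * M (Fin.tail f) (Fin.tail g)

/-- The monomial in the free (tensor) algebra on `V` corresponding to a
multi-index. -/
def fmono (k : Type*) [Field k] {ι : Type*} {N : ℕ} (f : Fin N → ι) :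
    FreeAlgebra k ι :=
  (List.ofFn fun s => FreeAlgebra.ι k (f s)).prod

/-- The element of the tensor algebra corresponding to a degree-`N` tensor `ω`. -/
def embedVec (k : Type*) [Field k] {ι : Type*} [Fintype ι] (N : ℕ)
    (ω : (Fin N → ι) → k) : FreeAlgebra k ι :=
  ∑ f : Fin N → ι, ω f • fmono k f

end Braided'

/-!
The first claim holds because the ideal is spanned by the products `x ω y` with `ω ∈ K_N`.

For the second, the braided factorial also factors with `[N!]_B ⊗ 1` on the right:
`[(N+1)!]_B = T ([N!]_B ⊗ 1)` for some `T`. Induction on `N` gives this from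
`[N+2]_B = 1 + B_{N+1} ([N+1]_B ⊗ 1)`, since `B_{N+1}` acts on the last two tensor factors and so
commutes with `M ⊗ 1 ⊗ 1` for every `M`. Hence `[(N+1)!]_B (ω ⊗ v) = T (([N!]_B ω) ⊗ v) = 0` for
`ω ∈ K_N`. The opposite recursion `[(N+1)!]_B = (1 ⊗ [N!]_B) [N+1]'_B` gives `V ⊗ K_N ⊆ K_{N+1}` in
the same way, with `B_1` commuting with `1 ⊗ 1 ⊗ M`.
-/

open scoped Kronecker

section OneKronecker

variable {m n R : Type*} [Fintype m] [Fintype n] [DecidableEq m] [DecidableEq n] [CommSemiring R]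

variable (m) in
def Matrix.oneKroneckerRingHom : Matrix n n R →+* Matrix (m × n) (m × n) R where
  toFun M := (1 : Matrix m m R) ⊗ₖ M
  map_one' := one_kronecker_one
  map_mul' M P := by rw [← mul_kronecker_mul, one_mul]
  map_zero' := kronecker_zero _
  map_add' := kronecker_add _

theorem Matrix.commute_kronecker_one_one_kronecker (A : Matrix m m R) (M : Matrix n n R) :
    Commute (A ⊗ₖ (1 : Matrix n n R)) ((1 : Matrix m m R) ⊗ₖ M) := by
  simp only [Commute, SemiconjBy, ← mul_kronecker_mul, mul_one, one_mul]

end OneKronecker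

theorem Fin.tail_apply_zero {α : Type*} {N : ℕ} (f : Fin (N + 2) → α) : Fin.tail f 0 = f 1 :=
  congrArg f Fin.succ_zero_eq_one

def Fin.consPairEquiv (ι : Type*) (N : ℕ) : (ι × ι) × (Fin N → ι) ≃ (Fin (N + 2) → ι) where
  toFun p := Fin.cons p.1.1 (Fin.cons p.1.2 p.2)
  invFun f := ((f 0, f 1), Fin.tail (Fin.tail f))
  left_inv p := by simp
  right_inv f := by simp [← Fin.tail_apply_zero]

def Fin.snocPairEquiv (ι : Type*) (N : ℕ) : (Fin N → ι) × (ι × ι) ≃ (Fin (N + 2) → ι) where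
  toFun p := Fin.snoc (Fin.snoc p.1 p.2.1) p.2.2
  invFun f := (Fin.init (Fin.init f), (f (Fin.last N).castSucc, f (Fin.last (N + 1))))
  left_inv p := by simp
  right_inv f := by
    simp only [show f (Fin.last N).castSucc = Fin.init f (Fin.last N) from rfl, Fin.snoc_init_self]

/-- `E` plays the role of `M ↦ M ⊗ 1`, `I n` of `[n]_B` and `X n` of `B_{n+1}`. -/
theorem exists_eq_mul_map_of_eq_map_mul {R : ℕ → Type*} [∀ n, Semiring (R n)]
    (E : ∀ n, R n →+* R (n + 1)) (F I : ∀ n, R n) (X : ∀ n, R (n + 2))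
    (hF₀ : F 0 = 1) (hF : ∀ n, F (n + 1) = E n (F n) * I (n + 1))
    (hI : ∀ n, I (n + 2) = 1 + X n * E (n + 1) (I (n + 1)))
    (hX : ∀ n a, Commute (E (n + 1) (E n a)) (X n)) (n : ℕ) :
    ∃ T, F (n + 1) = T * E n (F n) := by
  induction n with
  | zero => exact ⟨F 1, by rw [hF₀, map_one, mul_one]⟩
  | succ n ih =>
    obtain ⟨T, hT⟩ := ih
    have hswap : E (n + 1) (F (n + 1)) * X n = E (n + 1) T * X n * E (n + 1) (E n (F n)) := by
      rw [hT, map_mul, mul_assoc, (hX n (F n)).eq, mul_assoc]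
    refine ⟨1 + E (n + 1) T * X n, ?_⟩
    calc F (n + 2)
        = E (n + 1) (F (n + 1)) + E (n + 1) (F (n + 1)) * X n * E (n + 1) (I (n + 1)) := by
          rw [hF (n + 1), hI, mul_add, mul_one, mul_assoc]
      _ = (1 + E (n + 1) T * X n) * E (n + 1) (F (n + 1)) := by
          rw [hswap, mul_assoc _ (E (n + 1) _), ← map_mul, ← hF, add_mul, one_mul]

section BraidedFactorial

variable {k : Type*} [Field k] {ι : Type*} [DecidableEq ι] {N : ℕ} (B : Matrix (ι × ι) (ι × ι) k)

theorem Bop_apply_of_lt {i : ℕ} (h : i + 1 < N) (f g : Fin N → ι) :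
    Bop B N i f g = B (f ⟨i, by omega⟩, f ⟨i + 1, h⟩) (g ⟨i, by omega⟩, g ⟨i + 1, h⟩) *
      if ∀ j : Fin N, (j : ℕ) ≠ i → (j : ℕ) ≠ i + 1 → f j = g j then 1 else 0 := by
  simp only [Bop, h, ↓reduceDIte]
  congr 1
  split_ifs with hfg
  · refine Finset.prod_eq_one fun j _ => ?_
    by_cases hj : (j : ℕ) = i ∨ (j : ℕ) = i + 1
    · rw [if_pos hj]
    · push Not at hj
      simp [hj.1, hj.2, hfg j hj.1 hj.2]
  · push Not at hfg
    obtain ⟨j, hj, hj', hne⟩ := hfg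
    exact Finset.prod_eq_zero (Finset.mem_univ j) (by simp [hj, hj', hne])

theorem extendFirst_eq_reindex (M : Matrix (Fin N → ι) (Fin N → ι) k) :
    extendFirst M = reindex (Fin.consEquiv _) (Fin.consEquiv _) ((1 : Matrix ι ι k) ⊗ₖ M) := by
  ext f g
  simp [extendFirst, one_apply]

theorem extendFirst_extendFirst_eq_reindex (M : Matrix (Fin N → ι) (Fin N → ι) k) :
    extendFirst (extendFirst M) =
      reindex (Fin.consPairEquiv ι N) (Fin.consPairEquiv ι N)
        ((1 : Matrix (ι × ι) (ι × ι) k) ⊗ₖ M) := by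
  ext f g
  simp [extendFirst, Fin.consPairEquiv, one_apply, ← ite_and, Fin.tail_apply_zero, and_comm]

theorem Bop_zero_eq_reindex :
    Bop B (N + 2) 0 = reindex (Fin.consPairEquiv ι N) (Fin.consPairEquiv ι N) (B ⊗ₖ 1) := by
  ext f g
  rw [Bop_apply_of_lt B (by omega)]
  simp [Fin.consPairEquiv, one_apply, funext_iff, Fin.forall_fin_succ, Fin.tail]

theorem Bop_add_two_self_eq_reindex :
    Bop B (N + 2) N = reindex (Fin.snocPairEquiv ι N) (Fin.snocPairEquiv ι N) (1 ⊗ₖ B) := by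
  ext f g
  rw [Bop_apply_of_lt B (by omega)]
  have hN : ∀ j : Fin N, (j : ℕ) ≠ N ∧ (j : ℕ) ≠ N + 1 := fun j => by omega
  have hlast : (Fin.last N).castSucc = ⟨N, by omega⟩ ∧ Fin.last (N + 1) = ⟨N + 1, by omega⟩ :=
    ⟨rfl, rfl⟩
  simp [Fin.snocPairEquiv, one_apply, funext_iff, Fin.forall_fin_succ', Fin.init, hN, hlast,
    mul_comm]

theorem extendFirst_Bop (i : ℕ) :
    extendFirst (Bop B N i) = Bop B (N + 1) (i + 1) := by
  by_cases h : i + 1 < N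
  · ext f g
    rw [Bop_apply_of_lt B (by omega), extendFirst, Bop_apply_of_lt B h]
    simp only [Fin.forall_fin_succ, Fin.tail]
    by_cases hC : ∀ j : Fin N, (j : ℕ) ≠ i → (j : ℕ) ≠ i + 1 → f j.succ = g j.succ
    · simp [eq_true hC]
    · simp [eq_false hC]
  · have h' : ¬ i + 1 + 1 < N + 1 := by omega
    ext f g
    simp [Bop, h, h', extendFirst, one_apply, funext_iff, Fin.forall_fin_succ, Fin.tail, ← ite_and,
      and_comm]

variable [Fintype ι]

theorem extendLast_eq_reindex (M : Matrix (Fin N → ι) (Fin N → ι) k) :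
    extendLast M = reindex (Fin.snocEquiv _) (Fin.snocEquiv _) ((1 : Matrix ι ι k) ⊗ₖ M) := by
  ext f g
  simp [extendLast, one_apply, mul_comm]

theorem extendLast_extendLast_eq_reindex (M : Matrix (Fin N → ι) (Fin N → ι) k) :
    extendLast (extendLast M) =
      reindex (Fin.snocPairEquiv ι N) (Fin.snocPairEquiv ι N)
        (M ⊗ₖ (1 : Matrix (ι × ι) (ι × ι) k)) := by
  ext f g
  by_cases h : f (Fin.last N).castSucc = g (Fin.last N).castSucc <;>
    simp [extendLast, Fin.snocPairEquiv, one_apply, Fin.init, h]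

theorem extendLast_Bop {i : ℕ} (h : i + 1 < N) :
    extendLast (Bop B N i) = Bop B (N + 1) i := by
  ext f g
  rw [Bop_apply_of_lt B (by omega), extendLast, Bop_apply_of_lt B h]
  have hi : N ≠ i ∧ N ≠ i + 1 := by omega
  simp only [Fin.forall_fin_succ', Fin.init]
  by_cases hC : ∀ j : Fin N, (j : ℕ) ≠ i → (j : ℕ) ≠ i + 1 → f j.castSucc = g j.castSucc
  · simp [eq_true hC, hi]
  · simp [eq_false hC]

variable (k ι) in
def extendFirstHom (N : ℕ) :
    Matrix (Fin N → ι) (Fin N → ι) k →+* Matrix (Fin (N + 1) → ι) (Fin (N + 1) → ι) k :=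
  ((reindexAlgEquiv k k (Fin.consEquiv _)).toRingEquiv.toRingHom.comp
    (oneKroneckerRingHom ι)).copy extendFirst (funext extendFirst_eq_reindex)

variable (k ι) in
def extendLastHom (N : ℕ) :
    Matrix (Fin N → ι) (Fin N → ι) k →+* Matrix (Fin (N + 1) → ι) (Fin (N + 1) → ι) k :=
  ((reindexAlgEquiv k k (Fin.snocEquiv _)).toRingEquiv.toRingHom.comp
    (oneKroneckerRingHom ι)).copy extendLast (funext extendLast_eq_reindex)

theorem extendFirst_one : extendFirst (1 : Matrix (Fin N → ι) (Fin N → ι) k) = 1 :=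
  map_one (extendFirstHom k ι N)

theorem extendFirst_mul (M P : Matrix (Fin N → ι) (Fin N → ι) k) :
    extendFirst (M * P) = extendFirst M * extendFirst P :=
  map_mul (extendFirstHom k ι N) M P

theorem extendFirst_sum {α : Type*} (s : Finset α) (M : α → Matrix (Fin N → ι) (Fin N → ι) k) :
    extendFirst (∑ a ∈ s, M a) = ∑ a ∈ s, extendFirst (M a) :=
  map_sum (extendFirstHom k ι N) M s

theorem extendLast_one : extendLast (1 : Matrix (Fin N → ι) (Fin N → ι) k) = 1 :=
  map_one (extendLastHom k ι N)

theorem extendLast_mul (M P : Matrix (Fin N → ι) (Fin N → ι) k) :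
    extendLast (M * P) = extendLast M * extendLast P :=
  map_mul (extendLastHom k ι N) M P

theorem extendLast_sum {α : Type*} (s : Finset α) (M : α → Matrix (Fin N → ι) (Fin N → ι) k) :
    extendLast (∑ a ∈ s, M a) = ∑ a ∈ s, extendLast (M a) :=
  map_sum (extendLastHom k ι N) M s

theorem commute_extendFirst_extendFirst_Bop_zero (M : Matrix (Fin N → ι) (Fin N → ι) k) :
    Commute (extendFirst (extendFirst M)) (Bop B (N + 2) 0) := by
  rw [extendFirst_extendFirst_eq_reindex, Bop_zero_eq_reindex]
  exact ((commute_kronecker_one_one_kronecker B M).map (reindexAlgEquiv k k _)).symm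

theorem commute_extendLast_extendLast_Bop_add_two_self (M : Matrix (Fin N → ι) (Fin N → ι) k) :
    Commute (extendLast (extendLast M)) (Bop B (N + 2) N) := by
  rw [extendLast_extendLast_eq_reindex, Bop_add_two_self_eq_reindex]
  exact (commute_kronecker_one_one_kronecker M B).map (reindexAlgEquiv k k _)

theorem chainAsc_succ_succ (n m : ℕ) :
    chainAsc B (n + 1) (m + 1) = Bop B (n + 1) 0 * extendFirst (chainAsc B n m) := by
  induction m with
  | zero => simp [chainAsc, extendFirst_one]
  | succ m ih => rw [chainAsc, ih, mul_assoc, ← extendFirst_Bop, ← extendFirst_mul, chainAsc]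

theorem braidedInt'_succ (n : ℕ) :
    braidedInt' B (n + 1) = 1 + Bop B (n + 1) 0 * extendFirst (braidedInt' B n) := by
  simp only [braidedInt', Finset.sum_range_succ', chainAsc_succ_succ, extendFirst_sum,
    Finset.mul_sum]
  exact add_comm _ _

theorem chainDesc_succ_succ (n : ℕ) {m : ℕ} (hm : m ≤ n) :
    chainDesc B (n + 2) (m + 1) = Bop B (n + 2) n * extendLast (chainDesc B (n + 1) m) := by
  induction m with
  | zero => simp [chainDesc, extendLast_one]
  | succ m ih =>
    rw [chainDesc, ih (by omega), mul_assoc, show n + 2 - 2 - (m + 1) = n + 1 - 2 - m by omega,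
      ← extendLast_Bop B (show n + 1 - 2 - m + 1 < n + 1 by omega), ← extendLast_mul, chainDesc]

theorem braidedInt_succ_succ (n : ℕ) :
    braidedInt B (n + 2) = 1 + Bop B (n + 2) n * extendLast (braidedInt B (n + 1)) := by
  rw [braidedInt, Finset.sum_range_succ', braidedInt, extendLast_sum, Finset.mul_sum,
    Finset.sum_congr rfl fun m hm => chainDesc_succ_succ B n (Finset.mem_range_succ_iff.mp hm)]
  exact add_comm _ _

theorem exists_braidedFactorial_succ_eq_mul_extendLast (N : ℕ) :
    ∃ T, braidedFactorial B (N + 1) = T * extendLast (braidedFactorial B N) :=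
  exists_eq_mul_map_of_eq_map_mul (extendLastHom k ι) (braidedFactorial B) (braidedInt B)
    (fun n => Bop B (n + 2) n) rfl (fun _ => rfl) (braidedInt_succ_succ B)
    (fun _ => commute_extendLast_extendLast_Bop_add_two_self B) N

theorem exists_braidedFactorial_succ_eq_mul_extendFirst
    (hrec : ∀ N : ℕ,
      braidedFactorial B (N + 1) = extendFirst (braidedFactorial B N) * braidedInt' B (N + 1))
    (N : ℕ) : ∃ T, braidedFactorial B (N + 1) = T * extendFirst (braidedFactorial B N) :=
  exists_eq_mul_map_of_eq_map_mul (extendFirstHom k ι) (braidedFactorial B) (braidedInt' B)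
    (fun n => Bop B (n + 2) 0) rfl hrec (fun n => braidedInt'_succ B (n + 1))
    (fun _ => commute_extendFirst_extendFirst_Bop_zero B) N

theorem extendFirst_mulVec (M : Matrix (Fin N → ι) (Fin N → ι) k) (v : ι → k)
    (ω : (Fin N → ι) → k) :
    extendFirst M *ᵥ (fun f => v (f 0) * ω (Fin.tail f))
      = fun f => v (f 0) * (M *ᵥ ω) (Fin.tail f) := by
  funext f
  simp only [mulVec, dotProduct, extendFirst]
  rw [← (Fin.consEquiv fun _ => ι).sum_comp, Fintype.sum_prod_type]
  simp [Fin.consEquiv, ite_mul, Finset.mul_sum, mul_left_comm]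

theorem extendLast_mulVec (M : Matrix (Fin N → ι) (Fin N → ι) k) (v : ι → k)
    (ω : (Fin N → ι) → k) :
    extendLast M *ᵥ (fun f => ω (Fin.init f) * v (f (Fin.last N)))
      = fun f => (M *ᵥ ω) (Fin.init f) * v (f (Fin.last N)) := by
  funext f
  simp only [mulVec, dotProduct, extendLast]
  rw [← (Fin.snocEquiv fun _ => ι).sum_comp, Fintype.sum_prod_type]
  simp [Fin.snocEquiv, ite_mul, Finset.sum_mul, mul_assoc]

theorem braidedFactorial_succ_mulVec_snoc_eq_zero {ω : (Fin N → ι) → k}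
    (hω : braidedFactorial B N *ᵥ ω = 0) (v : ι → k) :
    braidedFactorial B (N + 1) *ᵥ (fun f => ω (Fin.init f) * v (f (Fin.last N))) = 0 := by
  obtain ⟨T, hT⟩ := exists_braidedFactorial_succ_eq_mul_extendLast B N
  rw [hT, ← mulVec_mulVec, extendLast_mulVec, hω]
  simp only [Pi.zero_apply, zero_mul]
  exact T.mulVec_zero

theorem braidedFactorial_succ_mulVec_cons_eq_zero
    (hrec : ∀ N : ℕ,
      braidedFactorial B (N + 1) = extendFirst (braidedFactorial B N) * braidedInt' B (N + 1))
    {ω : (Fin N → ι) → k} (hω : braidedFactorial B N *ᵥ ω = 0) (v : ι → k) :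
    braidedFactorial B (N + 1) *ᵥ (fun f => v (f 0) * ω (Fin.tail f)) = 0 := by
  obtain ⟨T, hT⟩ := exists_braidedFactorial_succ_eq_mul_extendFirst B hrec N
  rw [hT, ← mulVec_mulVec, extendFirst_mulVec, hω]
  simp only [Pi.zero_apply, mul_zero]
  exact T.mulVec_zero

end BraidedFactorial

theorem stmt17_general {k : Type*} [Field k] {ι : Type*} [Fintype ι] [DecidableEq ι]
    (B : Matrix (ι × ι) (ι × ι) k)
    (hrec : ∀ N : ℕ,
      braidedFactorial B (N + 1) = extendFirst (braidedFactorial B N) * braidedInt' B (N + 1))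
    (J : Submodule k (FreeAlgebra k ι))
    (hJ : J = Submodule.span k {z : FreeAlgebra k ι |
      ∃ (x y : FreeAlgebra k ι) (N : ℕ) (ω : (Fin N → ι) → k),
        braidedFactorial B N *ᵥ ω = 0 ∧ z = x * embedVec k N ω * y}) :
    (∀ (N : ℕ) (ω : (Fin N → ι) → k),
      braidedFactorial B N *ᵥ ω = 0 → embedVec k N ω ∈ J) ∧
    (∀ (N : ℕ) (ω : (Fin N → ι) → k), braidedFactorial B N *ᵥ ω = 0 →
      ∀ v : ι → k,
        braidedFactorial B (N + 1) *ᵥ (fun f => v (f 0) * ω (Fin.tail f)) = 0 ∧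
        braidedFactorial B (N + 1) *ᵥ (fun f => ω (Fin.init f) * v (f (Fin.last N))) = 0) := by
  subst hJ
  exact ⟨fun N ω hω => Submodule.subset_span ⟨1, 1, N, ω, hω, by rw [one_mul, mul_one]⟩,
    fun N ω hω v => ⟨braidedFactorial_succ_mulVec_cons_eq_zero B hrec hω v,
      braidedFactorial_succ_mulVec_snoc_eq_zero B hω v⟩⟩

/-- let `K_N = ker [N!]_B`. The two-sided ideal of the tensor
algebra generated by all the `K_N` contains each `K_N` in its degree-`N`
component; moreover, if the braided factorial also satisfies the opposite
recursion `[N!]_B = (1 ⊗ [(N-1)!]_B)[N]'_B`, then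
`V ⊗ K_{N-1} + K_{N-1} ⊗ V ⊆ K_N`. -/
theorem stmt17 {k : Type*} [Field k] {ι : Type*} [Fintype ι] [DecidableEq ι]
    [FiniteDimensional k (ι → k)]
    (B : Matrix (ι × ι) (ι × ι) k)
    (hBraid : Bop B 3 0 * Bop B 3 1 * Bop B 3 0 = Bop B 3 1 * Bop B 3 0 * Bop B 3 1)
    (hrec : ∀ N : ℕ,
      braidedFactorial B (N + 1) = extendFirst (braidedFactorial B N) * braidedInt' B (N + 1))
    (J : Submodule k (FreeAlgebra k ι))
    (hJ : J = Submodule.span k {z : FreeAlgebra k ι |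
      ∃ (x y : FreeAlgebra k ι) (N : ℕ) (ω : (Fin N → ι) → k),
        braidedFactorial B N *ᵥ ω = 0 ∧ z = x * embedVec k N ω * y}) :
    (∀ (N : ℕ) (ω : (Fin N → ι) → k),
      braidedFactorial B N *ᵥ ω = 0 → embedVec k N ω ∈ J) ∧
    (∀ (N : ℕ) (ω : (Fin N → ι) → k), braidedFactorial B N *ᵥ ω = 0 →
      ∀ v : ι → k,
        braidedFactorial B (N + 1) *ᵥ (fun f => v (f 0) * ω (Fin.tail f)) = 0 ∧
        braidedFactorial B (N + 1) *ᵥ (fun f => ω (Fin.init f) * v (f (Fin.last N))) = 0) :=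
  stmt17_general B hrec J hJ
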